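/- Let Γ be a simple (hole-free) finite connected induced subgraph of the triangular grid, let q ∈ {x,y,z}, let P be a q-portal of Γ with P ≠ V, and let C be a connected component of the subgraph of Γ induced on V∖P. Then the set C ∪ P induces a connected subgraph of G_Δ and C ∪ P has no inner holes (i.e., splitting a simple region at a portal yields simple regions). -/

import Mathlib

open SimpleGraph

/-- The infinite triangular grid graph on `ℤ × ℤ`. -/
def triGrid : SimpleGraph (ℤ × ℤ) where
  Adj u v := u - v = (1, 0) ∨ u - v = (-1, 0) ∨ u - v = (0, 1) ∨ u - v = (0, -1) ∨
    u - v = (1, -1) ∨ u - v = (-1, 1)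
  symm := by
    constructor
    intro u v h
    have hvu : v - u = -(u - v) := by ring
    rcases h with h | h | h | h | h | h <;> rw [hvu, h] <;> simp [Prod.ext_iff]
  loopless := by
    constructor
    intro u h
    simp [Prod.ext_iff] at h

/-- A finite set is hole-free (simple) if every connected component of the complement
is infinite, i.e., there are no inner holes. -/
def HoleFree (S : Set (ℤ × ℤ)) : Prop :=
  ∀ C : (triGrid.induce Sᶜ).ConnectedComponent, C.supp.Infinite

/-- The graph on `V` whose edges are the edges of the induced grid graph in direction `±e`. -/
def portalLineGraph (V : Set (ℤ × ℤ)) (e : ℤ × ℤ) : SimpleGraph V where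
  Adj u v := triGrid.Adj u v ∧ ((u : ℤ × ℤ) - v = e ∨ (v : ℤ × ℤ) - u = e)
  symm := ⟨fun u v ⟨h, h'⟩ => ⟨h.symm, h'.symm⟩⟩
  loopless := ⟨fun u ⟨h, _⟩ => triGrid.irrefl h⟩

/-- The `e`-portals of the induced subgraph on `V`: connected components of `portalLineGraph`. -/
abbrev Portal (V : Set (ℤ × ℤ)) (e : ℤ × ℤ) := (portalLineGraph V e).ConnectedComponent

/-- The portal containing a given vertex. -/
def portalMk (V : Set (ℤ × ℤ)) (e : ℤ × ℤ) (u : V) : Portal V e :=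
  (portalLineGraph V e).connectedComponentMk u

/-- The `e`-portal graph: vertices are the `e`-portals, two portals being adjacent iff
some edge of the induced grid graph joins them. -/
def portalGraph (V : Set (ℤ × ℤ)) (e : ℤ × ℤ) : SimpleGraph (Portal V e) where
  Adj P Q := P ≠ Q ∧ ∃ u v : V, (triGrid.induce V).Adj u v ∧
    portalMk V e u = P ∧ portalMk V e v = Q
  symm := ⟨fun P Q ⟨hne, u, v, h, hu, hv⟩ => ⟨hne.symm, v, u, h.symm, hv, hu⟩⟩
  loopless := ⟨fun P h => h.1 rfl⟩

/-- Distance between the portals of `u` and `v` in the `e`-portal graph. -/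
noncomputable def portalDist (V : Set (ℤ × ℤ)) (e : ℤ × ℤ) (u v : V) : ℕ :=
  (portalGraph V e).dist (portalMk V e u) (portalMk V e v)

/-- A set `P` is an `e`-portal of the induced subgraph on `V` (as a set of grid points). -/
def IsPortal (V : Set (ℤ × ℤ)) (e : ℤ × ℤ) (P : Set (ℤ × ℤ)) : Prop :=
  ∃ C : Portal V e, P = Subtype.val '' C.supp

/-- `R` is geodesically convex in the subgraph induced on `V`: for all `u, v ∈ R`,
every shortest `u`–`v` path in the induced graph stays inside `R`. -/
def GeodesicallyConvex (V R : Set (ℤ × ℤ)) : Prop :=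
  ∀ u v : V, (u : ℤ × ℤ) ∈ R → (v : ℤ × ℤ) ∈ R →
    ∀ p : (triGrid.induce V).Walk u v, p.length = (triGrid.induce V).dist u v →
      ∀ w ∈ p.support, (w : ℤ × ℤ) ∈ R


/-!
Connectedness: `C` and `P` each induce connected subgraphs, and a walk in `V` from `C` to `P`
leaves `C` along an edge that must land in `P`, because `C` is a whole component of `V \ P`.

Hole-freeness: let `H` be a finite hole of `C ∪ P`. It lies in `V`, since `V` has no inner holes,
and it is not adjacent to `C`, again because `C` is a component of `V \ P`. So every neighbour
of `H` outside `H` lies on `P`, hence on a single line parallel to `e`. But the points of `H`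
extremal in the direction transverse to `e` have outside neighbours on two different such lines.
-/

namespace SimpleGraph

variable {α : Type*} {G : SimpleGraph α}

lemma ConnectedComponent.mem_image_supp_of_adj {s : Set α} {D : (G.induce s).ConnectedComponent}
    {a x : α} (ha : a ∈ Subtype.val '' D.supp) (hx : x ∈ s) (hax : G.Adj a x) :
    x ∈ Subtype.val '' D.supp := by
  obtain ⟨a, rfl, rfl⟩ := ha
  exact ⟨⟨x, hx⟩, (ConnectedComponent.connectedComponentMk_eq_of_adj
    (show (G.induce s).Adj a ⟨x, hx⟩ from hax)).symm, rfl⟩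

lemma ConnectedComponent.connected_induce_image_supp {s : Set α} {H : SimpleGraph s}
    (hH : ∀ u v, H.Adj u v → G.Adj u v) (K : H.ConnectedComponent) :
    (G.induce (Subtype.val '' K.supp)).Connected := by
  let f : K.toSimpleGraph →g G.induce (Subtype.val '' K.supp) :=
    { toFun := fun u => ⟨u.1.1, u.1, u.2, rfl⟩
      map_rel' := fun h => hH _ _ h }
  refine K.connected_toSimpleGraph.map f ?_
  rintro ⟨_, u, hu, rfl⟩
  exact ⟨⟨u, hu⟩, rfl⟩

lemma Preconnected.exists_adj_image_supp_of_mem {V P : Set α} (hV : (G.induce V).Preconnected)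
    (D : (G.induce (V \ P)).ConnectedComponent) {p : α} (hpV : p ∈ V) (hpP : p ∈ P) :
    ∃ a ∈ Subtype.val '' D.supp, ∃ b ∈ P, G.Adj a b := by
  obtain ⟨c, hc⟩ := D.nonempty_supp
  obtain ⟨w⟩ := hV ⟨c.1, c.2.1⟩ ⟨p, hpV⟩
  obtain ⟨d, -, hd₁, hd₂⟩ := w.exists_boundary_dart {x | x.1 ∈ Subtype.val '' D.supp}
    ⟨c, hc, rfl⟩ fun ⟨x, _, hx⟩ => (hx ▸ x.2).2 hpP
  refine ⟨_, hd₁, d.snd, ?_, d.adj⟩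
  by_contra hP
  exact hd₂ (D.mem_image_supp_of_adj hd₁ ⟨d.snd.2, hP⟩ d.adj)

lemma image_supp_subset_of_forall_infinite [Infinite α] {V W : Set α} (hWV : W ⊆ V)
    (hV : ∀ K : (G.induce Vᶜ).ConnectedComponent, K.supp.Infinite)
    (K : (G.induce Wᶜ).ConnectedComponent) (hK : K.supp.Finite) :
    Subtype.val '' K.supp ⊆ V := by
  rintro _ ⟨x, hx, rfl⟩
  by_contra hxV
  let ι := G.induceHomOfLE (Set.compl_subset_compl.mpr hWV)
  refine hV ((G.induce Vᶜ).connectedComponentMk ⟨x, hxV⟩) (hK.subset ?_ |>.of_finite_image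
    ι.injective.injOn)
  rintro _ ⟨y, hy, rfl⟩
  exact (ConnectedComponent.sound ((ConnectedComponent.exact hy).map ι.toHom)).trans hx

end SimpleGraph

/-- The level sets of `cross e` are the lines of direction `e`. -/
def cross (e u : ℤ × ℤ) : ℤ := u.1 * e.2 - u.2 * e.1

lemma cross_self_add (e v : ℤ × ℤ) : cross e (e + v) = cross e v := by
  simp only [cross, Prod.fst_add, Prod.snd_add]
  ring

lemma cross_eq_of_reachable {V : Set (ℤ × ℤ)} {e : ℤ × ℤ} {u v : V}
    (h : (portalLineGraph V e).Reachable u v) : cross e u = cross e v := by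
  obtain ⟨w⟩ := h
  induction w with
  | nil => rfl
  | cons h _ ih =>
    refine Eq.trans ?_ ih
    rcases h.2 with h | h <;> rw [sub_eq_iff_eq_add] at h <;> simp [h, cross_self_add]

lemma cross_eq_of_mem_portal {V : Set (ℤ × ℤ)} {e : ℤ × ℤ} (Q : Portal V e) {p q : ℤ × ℤ}
    (hp : p ∈ Subtype.val '' Q.supp) (hq : q ∈ Subtype.val '' Q.supp) : cross e p = cross e q := by
  obtain ⟨u, hu, rfl⟩ := hp
  obtain ⟨v, hv, rfl⟩ := hq
  exact cross_eq_of_reachable (ConnectedComponent.exact (hu.trans hv.symm))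

lemma exists_triGrid_adj_cross_lt_lt {e : ℤ × ℤ} (he : e ≠ 0) (x : ℤ × ℤ) :
    ∃ y₁ y₂, triGrid.Adj y₁ x ∧ triGrid.Adj y₂ x ∧ cross e y₁ < cross e x ∧
      cross e x < cross e y₂ := by
  obtain ⟨a, b⟩ := e
  obtain ⟨x₁, x₂⟩ := x
  have hab : a ≠ 0 ∨ b ≠ 0 := by contrapose! he; simp [he]
  simp only [cross]
  rcases lt_trichotomy b 0 with hb | rfl | hb
  · exact ⟨(x₁ + 1, x₂), (x₁ - 1, x₂), by simp [triGrid], by simp [triGrid], by linarith,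
      by linarith⟩
  · rcases hab.resolve_right (not_not.2 rfl) |>.lt_or_gt with ha | ha
    · exact ⟨(x₁, x₂ - 1), (x₁, x₂ + 1), by simp [triGrid], by simp [triGrid], by linarith,
        by linarith⟩
    · exact ⟨(x₁, x₂ + 1), (x₁, x₂ - 1), by simp [triGrid], by simp [triGrid], by linarith,
        by linarith⟩
  · exact ⟨(x₁ - 1, x₂), (x₁ + 1, x₂), by simp [triGrid], by simp [triGrid], by linarith,
      by linarith⟩

lemma Set.Finite.eq_empty_of_outer_neighbors_on_line {e : ℤ × ℤ} (he : e ≠ 0) {H P : Set (ℤ × ℤ)}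
    (hH : H.Finite) (hP : ∀ p ∈ P, ∀ q ∈ P, cross e p = cross e q)
    (hout : ∀ x ∈ H, ∀ y, triGrid.Adj y x → y ∈ H ∨ y ∈ P) : H = ∅ := by
  by_contra hne
  have hne := Set.nonempty_iff_ne_empty.2 hne
  obtain ⟨m, hm, hmax⟩ := Set.exists_max_image H (cross e) hH hne
  obtain ⟨n, hn, hmin⟩ := Set.exists_min_image H (cross e) hH hne
  obtain ⟨-, y, -, hy, -, hmy⟩ := exists_triGrid_adj_cross_lt_lt he m
  obtain ⟨y', -, hy', -, hny', -⟩ := exists_triGrid_adj_cross_lt_lt he n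
  have hyP : y ∈ P := (hout m hm y hy).resolve_left fun h => (hmax y h).not_gt hmy
  have hy'P : y' ∈ P := (hout n hn y' hy').resolve_left fun h => (hmin y' h).not_gt hny'
  have := hP y hyP y' hy'P
  have := hmin m hm
  omega

theorem HoleFree.image_supp_union_of_cross_eq {V P : Set (ℤ × ℤ)} (hV : HoleFree V) (hPV : P ⊆ V)
    {e : ℤ × ℤ} (he : e ≠ 0) (hP : ∀ p ∈ P, ∀ q ∈ P, cross e p = cross e q)
    (D : (triGrid.induce (V \ P)).ConnectedComponent) :
    HoleFree (Subtype.val '' D.supp ∪ P) := by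
  set C := Subtype.val '' D.supp
  intro K
  by_contra hK
  have hCV : C ⊆ V := (Subtype.coe_image_subset _ _).trans Set.sdiff_subset
  have hKV := image_supp_subset_of_forall_infinite (Set.union_subset hCV hPV) hV K
    (Set.not_infinite.mp hK)
  have hout : ∀ x ∈ Subtype.val '' K.supp, ∀ y, triGrid.Adj y x →
      y ∈ Subtype.val '' K.supp ∨ y ∈ P := by
    intro x hx y hyx
    have hxCP : x ∉ C ∪ P := Subtype.coe_image_subset _ _ hx
    by_cases hy : y ∈ C ∪ P
    · refine Or.inr (hy.resolve_left fun hyC => hxCP (Or.inl ?_))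
      exact D.mem_image_supp_of_adj hyC ⟨hKV hx, fun hxP => hxCP (Or.inr hxP)⟩ hyx
    · exact Or.inl (K.mem_image_supp_of_adj hx hy hyx.symm)
  have hKempty := (Set.not_infinite.mp hK).image Subtype.val |>.eq_empty_of_outer_neighbors_on_line
    he hP hout
  exact K.nonempty_supp.ne_empty (Set.image_eq_empty.mp hKempty)

theorem split_at_portal_simple_general (V : Set (ℤ × ℤ))
    (hconn : (triGrid.induce V).Connected) (hsimple : HoleFree V)
    (e : ℤ × ℤ) (he : e ∈ ({(1, 0), (0, 1), (1, -1)} : Set (ℤ × ℤ)))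
    (P : Set (ℤ × ℤ)) (hP : IsPortal V e P)
    (C : Set (ℤ × ℤ))
    (hC : ∃ D : (triGrid.induce (V \ P)).ConnectedComponent, C = Subtype.val '' D.supp) :
    (triGrid.induce (C ∪ P)).Connected ∧ HoleFree (C ∪ P) := by
  obtain ⟨Q, rfl⟩ := hP
  obtain ⟨D, rfl⟩ := hC
  have he0 : e ≠ 0 := by rcases he with rfl | rfl | rfl <;> decide
  have hQV : Subtype.val '' Q.supp ⊆ V := Subtype.coe_image_subset _ _
  obtain ⟨p, hp⟩ := Q.nonempty_supp.image Subtype.val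
  obtain ⟨a, ha, b, hb, hab⟩ := hconn.preconnected.exists_adj_image_supp_of_mem D (hQV hp) hp
  refine ⟨connected_induce_union ?_ ?_ ha hb hab, hsimple.image_supp_union_of_cross_eq hQV he0
    (fun _ hp _ hq => cross_eq_of_mem_portal Q hp hq) D⟩
  · exact (D.connected_induce_image_supp fun _ _ h => h).preconnected
  · exact (Q.connected_induce_image_supp
      fun _ _ (h : (portalLineGraph V e).Adj _ _) => h.1).preconnected

/-- Splitting a simple region at a portal yields simple regions: if `P` is a
`q`-portal of the simple connected induced subgraph on `V` with `P ≠ V`, and `C` is a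
connected component of the subgraph induced on `V \ P`, then `C ∪ P` induces a connected
subgraph and has no inner holes. -/
theorem split_at_portal_simple (V : Set (ℤ × ℤ)) (hfin : V.Finite) (hne : V.Nonempty)
    (hconn : (triGrid.induce V).Connected) (hsimple : HoleFree V)
    (e : ℤ × ℤ) (he : e ∈ ({(1, 0), (0, 1), (1, -1)} : Set (ℤ × ℤ)))
    (P : Set (ℤ × ℤ)) (hP : IsPortal V e P) (hPV : P ≠ V)
    (C : Set (ℤ × ℤ))
    (hC : ∃ D : (triGrid.induce (V \ P)).ConnectedComponent, C = Subtype.val '' D.supp) :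
    (triGrid.induce (C ∪ P)).Connected ∧ HoleFree (C ∪ P) :=
  split_at_portal_simple_general V hconn hsimple e he P hP C hC
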